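/- arXiv:2407.05041 — 5 statements merged into one kernel-verified Lean document; each statement's English description precedes it below -/
import Mathlib

section
/- For all integers n ≥ 1 and 1 ≤ k ≤ n, we have ∑_{j=k}^{n} P_{n-j} a_{j-k} = 1. -/
/-- For all `n ≥ 1` and `1 ≤ k ≤ n`, `∑_{j=k}^n P_{n-j} a_{j-k} = 1`. -/
theorem stmt_1 (α ρ : ℝ) (hα0 : 0 < α) (hα1 : α < 1) (hρ : 0 < ρ)
    (a P : ℕ → ℝ)
    (ha : ∀ k : ℕ, a k = (((k : ℝ) + 1) ^ (1 - α) - (k : ℝ) ^ (1 - α)) /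
      (Real.Gamma (2 - α) * ρ ^ α))
    (hP0 : P 0 = 1 / a 0)
    (hP : ∀ l : ℕ, P (l + 1) =
      (1 / a 0) * ∑ m ∈ Finset.range (l + 1), P m * (a (l - m) - a (l + 1 - m))) :
    ∀ n k : ℕ, 1 ≤ k → k ≤ n →
      ∑ j ∈ Finset.Icc k n, P (n - j) * a (j - k) = 1 := by
  have ha0 : a 0 ≠ 0 := by
    have h1 : a 0 = 1 / (Real.Gamma (2 - α) * ρ ^ α) := by
      rw [ha 0]
      norm_num [Real.zero_rpow (show (1:ℝ) - α ≠ 0 by linarith)]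
    have hG : 0 < Real.Gamma (2 - α) := Real.Gamma_pos_of_pos (by linarith)
    have hp : 0 < ρ ^ α := Real.rpow_pos_of_pos hρ α
    rw [h1]
    positivity
  have key : ∀ l : ℕ, ∑ i ∈ Finset.range (l + 1), P (l - i) * a i = 1 := by
    intro l
    induction l with
    | zero =>
      simp [hP0]
      field_simp
    | succ l ih =>
      rw [Finset.sum_range_succ' (fun i => P (l + 1 - i) * a i)]
      have h1 : ∑ i ∈ Finset.range (l + 1), P (l + 1 - (i + 1)) * a (i + 1)
          = ∑ m ∈ Finset.range (l + 1), P m * a (l + 1 - m) := by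
        rw [← Finset.sum_range_reflect (fun m => P m * a (l + 1 - m)) (l + 1)]
        apply Finset.sum_congr rfl
        intro i hi
        simp only [Finset.mem_range] at hi
        have h2 : l + 1 - 1 - i = l - i := by omega
        have h3 : l + 1 - (l - i) = i + 1 := by omega
        have h4 : l + 1 - (i + 1) = l - i := by omega
        rw [h2, h3, h4]
      have h2 : P (l + 1) * a 0
          = ∑ m ∈ Finset.range (l + 1), P m * (a (l - m) - a (l + 1 - m)) := by
        rw [hP l]
        field_simp
      have h3 : ∑ i ∈ Finset.range (l + 1), P (l - i) * a i
          = ∑ m ∈ Finset.range (l + 1), P m * a (l - m) := by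
        rw [← Finset.sum_range_reflect (fun m => P m * a (l - m)) (l + 1)]
        apply Finset.sum_congr rfl
        intro i hi
        simp only [Finset.mem_range] at hi
        have hA : l + 1 - 1 - i = l - i := by omega
        have hB : l - (l - i) = i := by omega
        rw [hA, hB]
      simp only [Nat.sub_zero]
      rw [h1, h2, ← ih, h3, ← Finset.sum_add_distrib]
      apply Finset.sum_congr rfl
      intro m _
      ring
  intro n k hk hkn
  rw [← Finset.Ico_add_one_right_eq_Icc, Finset.sum_Ico_eq_sum_range]
  have hnk : n + 1 - k = (n - k) + 1 := by omega
  rw [hnk]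
  have := key (n - k)
  rw [← this]
  apply Finset.sum_congr rfl
  intro i hi
  simp only [Finset.mem_range] at hi
  have h1 : n - (k + i) = n - k - i := by omega
  have h2 : k + i - k = i := by omega
  rw [h1, h2]
end

section
/- For all integers n ≥ 1, ∑_{j=1}^{n} P_{n-j} ≤ t_n^α / Γ(1+α), where t_n = nρ. -/
/-!
With `rpowIncr p k = (k + 1) ^ p - k ^ p`, the L1 weights are
`a k = rpowIncr (1 - α) k / (Γ(2 - α) ρ^α)`, positive and decreasing by concavity of
`x ^ (1 - α)`. By induction the recursion makes `P` nonnegative and gives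
`∑_{m ≤ l} P m * a (l - m) = 1`. The increments `d i = ρ^α rpowIncr α i / Γ(1 + α)` of
`t_k^α / Γ(1 + α)` satisfy `∑_{i ≤ l} a (l - i) * d i ≥ 1`; multiplying these inequalities by `P`
and exchanging the order of summation gives `∑_{m < n} P m ≤ ∑_{i < n} d i = t_n^α / Γ(1 + α)`.

The inequality for `d` amounts to
`Γ(2 - α) Γ(1 + α) ≤ ∑_{i ≤ l} rpowIncr (1 - α) (l - i) * rpowIncr α i`. Split the Beta
integral `Γ(α) Γ(1 - α) = ∫_0^{l+1} s^(α-1) (l + 1 - s)^(-α) ds` over unit intervals: on each,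
`s^(α-1)` decreases and `(l + 1 - s)^(-α)` increases, so Chebyshev's integral inequality bounds
the piece by the product of the integrals of the two factors.
-/

open MeasureTheory Set Finset

noncomputable def rpowIncr (p : ℝ) (k : ℕ) : ℝ := ((k : ℝ) + 1) ^ p - (k : ℝ) ^ p

theorem sum_range_rpowIncr {p : ℝ} (hp : p ≠ 0) (n : ℕ) :
    ∑ k ∈ range n, rpowIncr p k = (n : ℝ) ^ p := by
  have := Finset.sum_range_sub (fun k : ℕ => (k : ℝ) ^ p) n
  simpa [rpowIncr, Real.zero_rpow hp] using this

theorem rpowIncr_antitone {p : ℝ} (hp₀ : 0 ≤ p) (hp₁ : p ≤ 1) : Antitone (rpowIncr p) := by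
  refine antitone_nat_of_succ_le fun k => ?_
  have h := (Real.concaveOn_rpow hp₀ hp₁).slope_anti_adjacent (x := k) (y := k + 1)
    (z := k + 1 + 1) (Set.mem_Ici.2 (Nat.cast_nonneg' k)) (Set.mem_Ici.2 (by positivity))
    (by linarith) (by linarith)
  rw [add_sub_cancel_left, add_sub_cancel_left, div_one, div_one] at h
  simpa only [rpowIncr, Nat.cast_add_one] using h

section Recursion

variable {a P : ℕ → ℝ} (hP0 : P 0 = 1 / a 0)
  (hP : ∀ l : ℕ, P (l + 1) =
    1 / a 0 * ∑ m ∈ range (l + 1), P m * (a (l - m) - a (l + 1 - m)))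
include hP0 hP

theorem sum_range_mul_eq_one_of_recursion (ha0 : a 0 ≠ 0) (l : ℕ) :
    ∑ m ∈ range (l + 1), P m * a (l - m) = 1 := by
  induction l with
  | zero => simp [hP0, ha0]
  | succ l ih =>
    have hPa : P (l + 1) * a 0 = ∑ m ∈ range (l + 1), P m * (a (l - m) - a (l + 1 - m)) := by
      rw [hP l]; field_simp
    rw [sum_range_succ, Nat.sub_self, hPa, ← ih, ← sum_add_distrib]
    exact sum_congr rfl fun m _ => by ring

theorem nonneg_of_recursion (ha0 : 0 < a 0) (ha : Antitone a) (m : ℕ) : 0 ≤ P m := by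
  induction m using Nat.strong_induction_on with
  | _ m ih =>
    match m with
    | 0 => rw [hP0]; positivity
    | l + 1 =>
      rw [hP l]
      refine mul_nonneg (by positivity) (sum_nonneg fun m hm => mul_nonneg (ih m ?_) ?_)
      · simp only [Finset.mem_range] at hm; omega
      · exact sub_nonneg.2 (ha (by omega))

end Recursion

theorem sum_range_le_of_one_le_sum_range_mul {a P d : ℕ → ℝ} (hP : ∀ m, 0 ≤ P m)
    (hPa : ∀ l, ∑ m ∈ range (l + 1), P m * a (l - m) = 1)
    (had : ∀ l, 1 ≤ ∑ i ∈ range (l + 1), a (l - i) * d i) (n : ℕ) :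
    ∑ m ∈ range n, P m ≤ ∑ i ∈ range n, d i := by
  cases n with
  | zero => simp
  | succ N =>
  calc ∑ m ∈ range (N + 1), P m
      ≤ ∑ m ∈ range (N + 1), P m * ∑ i ∈ range (N - m + 1), a (N - m - i) * d i :=
        sum_le_sum fun m _ => le_mul_of_one_le_right (hP m) (had (N - m))
    _ = ∑ m ∈ range (N + 1), ∑ i ∈ range (N - m + 1), P m * (a (N - m - i) * d i) := by
        simp_rw [mul_sum]
    _ = ∑ i ∈ range (N + 1), ∑ m ∈ range (N - i + 1), P m * (a (N - m - i) * d i) :=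
        sum_comm' fun m i => by simp only [Finset.mem_range]; omega
    _ = ∑ i ∈ range (N + 1), (∑ m ∈ range (N - i + 1), P m * a (N - i - m)) * d i := by
        simp_rw [sum_mul, mul_assoc, Nat.sub_right_comm N]
    _ = ∑ i ∈ range (N + 1), d i := by simp only [hPa, one_mul]

theorem sum_Icc_one_sub_eq_sum_range {M : Type*} [AddCommMonoid M] (f : ℕ → M) (n : ℕ) :
    ∑ j ∈ Icc 1 n, f (n - j) = ∑ m ∈ range n, f m := by
  rw [← Finset.Ico_add_one_right_eq_Icc, sum_Ico_reflect f 1 le_rfl]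
  simp

theorem integral_rpow_mul_sub_rpow {u v T : ℝ} (hu : 0 < u) (hv : 0 < v) (hT : 0 < T) :
    ∫ x in 0..T, x ^ (u - 1) * (T - x) ^ (v - 1) =
      T ^ (u + v - 1) * ProbabilityTheory.beta u v := by
  have h := Complex.betaIntegral_scaled u v hT
  rw [Complex.betaIntegral_eq_Gamma_mul_div _ _ (by simpa) (by simpa)] at h
  have hofReal : ∫ x in 0..T, (x : ℂ) ^ ((u : ℂ) - 1) * ((T : ℂ) - x) ^ ((v : ℂ) - 1) =
      ((∫ x in 0..T, x ^ (u - 1) * (T - x) ^ (v - 1) : ℝ) : ℂ) := by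
    rw [← intervalIntegral.integral_ofReal, intervalIntegral.integral_of_le hT.le,
      intervalIntegral.integral_of_le hT.le]
    refine setIntegral_congr_fun measurableSet_Ioc fun x hx => ?_
    rw [Complex.ofReal_mul, Complex.ofReal_cpow hx.1.le, Complex.ofReal_cpow (sub_nonneg.2 hx.2)]
    push_cast; rfl
  rw [hofReal, ← Complex.ofReal_add, Complex.Gamma_ofReal, Complex.Gamma_ofReal,
    Complex.Gamma_ofReal] at h
  rw [ProbabilityTheory.beta, ← Complex.ofReal_injective.eq_iff, h, Complex.ofReal_mul,
    Complex.ofReal_cpow hT.le]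
  push_cast; rfl

theorem intervalIntegrable_rpow_mul_sub_rpow {u v T : ℝ} (hu : 0 < u) (hv : 0 < v)
    (hT : 0 < T) :
    IntervalIntegrable (fun x => x ^ (u - 1) * (T - x) ^ (v - 1)) volume 0 T :=
  intervalIntegral.intervalIntegrable_of_integral_ne_zero <| by
    rw [integral_rpow_mul_sub_rpow hu hv hT]
    exact (mul_pos (Real.rpow_pos_of_pos hT _) (ProbabilityTheory.beta_pos hu hv)).ne'

theorem measureReal_mul_setIntegral_mul_le {X : Type*} [LinearOrder X] [MeasurableSpace X]
    {μ : Measure X} {s : Set X} (hs : MeasurableSet s) (hμs : μ s ≠ ⊤) {f g : X → ℝ}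
    (hf : AntitoneOn f s) (hg : MonotoneOn g s) (hfi : IntegrableOn f s μ)
    (hgi : IntegrableOn g s μ) (hfgi : IntegrableOn (fun x => f x * g x) s μ) :
    μ.real s * ∫ x in s, f x * g x ∂μ ≤ (∫ x in s, f x ∂μ) * ∫ x in s, g x ∂μ := by
  set F := ∫ x in s, f x ∂μ
  set G := ∫ x in s, g x ∂μ
  set K := ∫ x in s, f x * g x ∂μ
  have hc : ∀ c : ℝ, IntegrableOn (fun _ => c) s μ := fun c => integrableOn_const hμs
  -- `(f x - f y) * (g y - g x) ≥ 0` for all `x y ∈ s`; integrate in `y`, then in `x`.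
  have inner (x : X) : ∫ y in s, (f x - f y) * (g y - g x) ∂μ =
      f x * G + F * g x - (μ.real s * (f x * g x) + K) := by
    have e : ∀ y, (f x - f y) * (g y - g x) =
        f x * g y + f y * g x - (f x * g x + f y * g y) := fun y => by ring
    simp_rw [e]
    rw [integral_sub (by exact (hgi.const_mul _).add (hfi.mul_const _))
        (by exact (hc _).add hfgi), integral_add (hgi.const_mul _) (hfi.mul_const _),
      integral_add (hc _) hfgi, integral_const_mul, integral_mul_const, setIntegral_const,
      smul_eq_mul]
  have outer : ∫ x in s, (f x * G + F * g x - (μ.real s * (f x * g x) + K)) ∂μ =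
      2 * (F * G - μ.real s * K) := by
    rw [integral_sub (by exact (hfi.mul_const _).add (hgi.const_mul _))
        (by exact (hfgi.const_mul _).add (hc _)),
      integral_add (hfi.mul_const _) (hgi.const_mul _), integral_add (hfgi.const_mul _) (hc _),
      integral_const_mul, integral_mul_const, integral_const_mul, setIntegral_const, smul_eq_mul]
    ring
  have hnonneg : 0 ≤ ∫ x in s, ∫ y in s, (f x - f y) * (g y - g x) ∂μ ∂μ := by
    refine setIntegral_nonneg hs fun x hx => setIntegral_nonneg hs fun y hy => ?_
    rcases le_total x y with hxy | hyx
    · exact mul_nonneg (sub_nonneg.2 (hf hx hy hxy)) (sub_nonneg.2 (hg hx hy hxy))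
    · exact mul_nonneg_of_nonpos_of_nonpos (sub_nonpos.2 (hf hy hx hyx))
        (sub_nonpos.2 (hg hy hx hyx))
  simp_rw [inner, outer] at hnonneg
  linarith

theorem integral_rpow_mul_rpow_le {α : ℝ} (hα0 : 0 < α) (hα1 : α < 1) {i l : ℕ}
    (hil : i ≤ l) (hint : IntervalIntegrable (fun x : ℝ => x ^ (α - 1) * ((l : ℝ) + 1 - x) ^ (-α))
      volume i (i + 1)) :
    ∫ x in (i : ℝ)..(i + 1), x ^ (α - 1) * ((l : ℝ) + 1 - x) ^ (-α) ≤
      rpowIncr α i / α * (rpowIncr (1 - α) (l - i) / (1 - α)) := by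
  have hi : (0 : ℝ) ≤ i := i.cast_nonneg
  have hil' : (i : ℝ) + 1 ≤ l + 1 := by exact_mod_cast Nat.succ_le_succ hil
  have hf : AntitoneOn (fun x : ℝ => x ^ (α - 1)) (Ioo i (i + 1)) := fun x hx y _ hxy =>
    Real.rpow_le_rpow_of_nonpos (hi.trans_lt hx.1) hxy (by linarith)
  have hg : MonotoneOn (fun x : ℝ => ((l : ℝ) + 1 - x) ^ (-α)) (Ioo i (i + 1)) :=
    fun x _ y hy hxy =>
      Real.rpow_le_rpow_of_nonpos (by linarith [hy.2]) (by linarith) (by linarith)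
  have hfi : IntervalIntegrable (fun x : ℝ => x ^ (α - 1)) volume i (i + 1) :=
    intervalIntegral.intervalIntegrable_rpow' (by linarith)
  have hgi : IntervalIntegrable (fun x : ℝ => ((l : ℝ) + 1 - x) ^ (-α)) volume i (i + 1) := by
    simpa only [sub_sub_cancel] using
      (intervalIntegral.intervalIntegrable_rpow' (r := -α) (by linarith)
        (a := (l : ℝ) + 1 - i) (b := l + 1 - (i + 1))).comp_sub_left ((l : ℝ) + 1)
  have hIoo (h : ℝ → ℝ) : ∫ x in Ioo (i : ℝ) (i + 1), h x = ∫ x in (i : ℝ)..(i + 1), h x := by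
    rw [intervalIntegral.integral_of_le (by linarith), integral_Ioc_eq_integral_Ioo]
  have hvf : ∫ x in Ioo (i : ℝ) (i + 1), x ^ (α - 1) = rpowIncr α i / α := by
    rw [hIoo, integral_rpow (Or.inl (by linarith))]
    simp [rpowIncr]
  have hvg : ∫ x in Ioo (i : ℝ) (i + 1), ((l : ℝ) + 1 - x) ^ (-α) =
      rpowIncr (1 - α) (l - i) / (1 - α) := by
    rw [hIoo, intervalIntegral.integral_comp_sub_left (fun x : ℝ => x ^ (-α)),
      integral_rpow (Or.inl (by linarith))]
    simp only [add_sub_add_right_eq_sub, rpowIncr, Nat.cast_sub hil]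
    ring_nf
  have := measureReal_mul_setIntegral_mul_le measurableSet_Ioo (by simp) hf hg
    (hfi.1.mono_set Ioo_subset_Ioc_self) (hgi.1.mono_set Ioo_subset_Ioc_self)
    (hint.1.mono_set Ioo_subset_Ioc_self)
  simpa [hvf, hvg, hIoo] using this

theorem Gamma_two_sub_mul_Gamma_one_add_le {α : ℝ} (hα0 : 0 < α) (hα1 : α < 1) (l : ℕ) :
    Real.Gamma (2 - α) * Real.Gamma (1 + α) ≤
      ∑ i ∈ range (l + 1), rpowIncr (1 - α) (l - i) * rpowIncr α i := by
  set g : ℝ → ℝ := fun x => x ^ (α - 1) * ((l : ℝ) + 1 - x) ^ (-α)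
  have hT : (0 : ℝ) < l + 1 := by positivity
  have hg : g = fun x => x ^ (α - 1) * ((l : ℝ) + 1 - x) ^ ((1 - α) - 1) := by
    simp only [g, sub_sub_cancel_left]
  have hgi : IntervalIntegrable g volume 0 (l + 1) :=
    hg ▸ intervalIntegrable_rpow_mul_sub_rpow hα0 (by linarith) hT
  have hpiece (i : ℕ) (hi : i < l + 1) : IntervalIntegrable g volume i (i + 1) := by
    refine hgi.mono_set ?_
    rw [Set.uIcc_of_le (by linarith), Set.uIcc_of_le hT.le]
    exact Icc_subset_Icc i.cast_nonneg (by exact_mod_cast hi)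
  have hval : ∫ x in (0 : ℝ)..(l + 1), g x = Real.Gamma α * Real.Gamma (1 - α) := by
    rw [hg, integral_rpow_mul_sub_rpow hα0 (by linarith) hT]
    simp [ProbabilityTheory.beta]
  have hsplit : ∫ x in (0 : ℝ)..(l + 1), g x =
      ∑ i ∈ range (l + 1), ∫ x in (i : ℝ)..(i + 1), g x := by
    have := intervalIntegral.sum_integral_adjacent_intervals (a := fun i : ℕ => (i : ℝ))
      (f := g) (μ := volume) (n := l + 1) (fun k hk => by simpa using hpiece k hk)
    simpa using this.symm
  have hΓ : Real.Gamma (2 - α) * Real.Gamma (1 + α) =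
      α * (1 - α) * (Real.Gamma α * Real.Gamma (1 - α)) := by
    rw [show 2 - α = (1 - α) + 1 by ring, add_comm 1 α, Real.Gamma_add_one (by linarith),
      Real.Gamma_add_one hα0.ne']
    ring
  calc Real.Gamma (2 - α) * Real.Gamma (1 + α)
      = α * (1 - α) * ∑ i ∈ range (l + 1), ∫ x in (i : ℝ)..(i + 1), g x := by
        rw [hΓ, ← hval, hsplit]
    _ ≤ α * (1 - α) *
          ∑ i ∈ range (l + 1), rpowIncr α i / α * (rpowIncr (1 - α) (l - i) / (1 - α)) := by
        refine mul_le_mul_of_nonneg_left (sum_le_sum fun i hi => ?_) (by nlinarith)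
        have hi := Finset.mem_range.1 hi
        exact integral_rpow_mul_rpow_le hα0 hα1 (by omega) (hpiece i hi)
    _ = ∑ i ∈ range (l + 1), rpowIncr (1 - α) (l - i) * rpowIncr α i := by
        rw [mul_sum]
        refine sum_congr rfl fun i _ => ?_
        field_simp [show 1 - α ≠ 0 by linarith]

theorem one_le_sum_range_rpowIncr_mul {α ρ : ℝ} (hα0 : 0 < α) (hα1 : α < 1) (hρ : 0 < ρ)
    (l : ℕ) :
    1 ≤ ∑ i ∈ range (l + 1), rpowIncr (1 - α) (l - i) / (Real.Gamma (2 - α) * ρ ^ α) *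
      (ρ ^ α * rpowIncr α i / Real.Gamma (1 + α)) := by
  have hΓ₂ : 0 < Real.Gamma (2 - α) := Real.Gamma_pos_of_pos (by linarith)
  have hΓ₁ : 0 < Real.Gamma (1 + α) := Real.Gamma_pos_of_pos (by linarith)
  have hρα : 0 < ρ ^ α := Real.rpow_pos_of_pos hρ α
  have hsum : ∑ i ∈ range (l + 1), rpowIncr (1 - α) (l - i) / (Real.Gamma (2 - α) * ρ ^ α) *
      (ρ ^ α * rpowIncr α i / Real.Gamma (1 + α)) =
      (∑ i ∈ range (l + 1), rpowIncr (1 - α) (l - i) * rpowIncr α i) /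
        (Real.Gamma (2 - α) * Real.Gamma (1 + α)) := by
    rw [sum_div]
    refine sum_congr rfl fun i _ => ?_
    field_simp
  rw [hsum, one_le_div (by positivity)]
  exact Gamma_two_sub_mul_Gamma_one_add_le hα0 hα1 l

/-- For all `n ≥ 1`, `∑_{j=1}^n P_{n-j} ≤ t_n^α / Γ(1+α)` where `t_n = nρ`. -/
theorem stmt_3 (α ρ : ℝ) (hα0 : 0 < α) (hα1 : α < 1) (hρ : 0 < ρ)
    (a P : ℕ → ℝ)
    (ha : ∀ k : ℕ, a k = (((k : ℝ) + 1) ^ (1 - α) - (k : ℝ) ^ (1 - α)) /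
      (Real.Gamma (2 - α) * ρ ^ α))
    (hP0 : P 0 = 1 / a 0)
    (hP : ∀ l : ℕ, P (l + 1) =
      (1 / a 0) * ∑ m ∈ Finset.range (l + 1), P m * (a (l - m) - a (l + 1 - m))) :
    ∀ n : ℕ, 1 ≤ n →
      ∑ j ∈ Finset.Icc 1 n, P (n - j) ≤ ((n : ℝ) * ρ) ^ α / Real.Gamma (1 + α) := by
  intro n _
  have ha' (k : ℕ) : a k = rpowIncr (1 - α) k / (Real.Gamma (2 - α) * ρ ^ α) := ha k
  have hden : 0 < Real.Gamma (2 - α) * ρ ^ α :=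
    mul_pos (Real.Gamma_pos_of_pos (by linarith)) (Real.rpow_pos_of_pos hρ α)
  have ha0 : 0 < a 0 := by
    rw [ha']
    refine div_pos ?_ hden
    simp [rpowIncr, Real.zero_rpow (show 1 - α ≠ 0 by linarith)]
  have ha_anti : Antitone a := fun k m hkm => by
    simp only [ha']
    exact div_le_div_of_nonneg_right (rpowIncr_antitone (by linarith) (by linarith) hkm) hden.le
  calc ∑ j ∈ Icc 1 n, P (n - j) = ∑ m ∈ range n, P m := sum_Icc_one_sub_eq_sum_range P n
    _ ≤ ∑ i ∈ range n, ρ ^ α * rpowIncr α i / Real.Gamma (1 + α) :=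
        sum_range_le_of_one_le_sum_range_mul (nonneg_of_recursion hP0 hP ha0 ha_anti)
          (sum_range_mul_eq_one_of_recursion hP0 hP ha0.ne')
          (fun l => by simpa only [ha'] using one_le_sum_range_rpowIncr_mul hα0 hα1 hρ l) n
    _ = ((n : ℝ) * ρ) ^ α / Real.Gamma (1 + α) := by
        rw [← sum_div, ← mul_sum, sum_range_rpowIncr hα0.ne', Real.mul_rpow n.cast_nonneg hρ.le,
          mul_comm]
end

section
/- Let 0 < α < 1, β ≥ 1, and let N, q, n be integers with q ≥ 0 and qN + 1 ≤ n. Then there exists a constant C (independent of n, N, q, ρ) such that ∑_{j=qN+1}^{n} (j - qN)^{-β} (n - j + 1)^{α-1} ≤ C K_{β,n} (n - qN)^{α-1}, where K_{β,n} = 1 + (1 - n^{1-β})/(β-1) if β ≠ 1 and K_{1,n} = 1 + ln n. -/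
/-!
After the shift `i = j - qN`, `m = n - qN`, the sum is `∑_{i=1}^m i^{-β} (m+1-i)^{α-1}`.
Since `i + (m+1-i) = m+1`, one of the two factors has its argument at least `(m+1)/2`.
Where it is `m+1-i`, that factor is at most `2^{1-α} m^{α-1}`, and
`∑_{i ≤ m} i^{-β} ≤ 1 + ∫_1^n x^{-β} dx = K_{β,n}` by comparison with the integral.
Where it is `i`, `i^{-β} ≤ 2^β/m`, and `∑_{k ≤ m} k^{α-1} ≤ m^α/α`, again by integral comparison.
-/

open Finset Real

theorem AntitoneOn.sum_Icc_le_add_integral {f : ℝ → ℝ} {m : ℕ} (hm : 1 ≤ m)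
    (hf : AntitoneOn f (Set.Icc 1 m)) :
    ∑ k ∈ Icc 1 m, f k ≤ f 1 + ∫ x in (1 : ℝ)..m, f x := by
  have h := AntitoneOn.sum_le_integral_Ico hm (by simpa using hf)
  rw [sum_Ico_add' (fun k : ℕ => f k) 1 m 1] at h
  rw [← add_sum_Ioc_eq_sum_Icc hm]
  have : Ico (1 + 1) (m + 1) = Ioc 1 m := by ext; simp only [mem_Ico, mem_Ioc]; omega
  push_cast at h ⊢
  rw [this] at h
  linarith

theorem sum_Icc_rpow_neg_le {β : ℝ} (hβ : 0 ≤ β) {m : ℕ} (hm : 1 ≤ m) :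
    ∑ k ∈ Icc 1 m, (k : ℝ) ^ (-β) ≤ 1 + ∫ x in (1 : ℝ)..m, x ^ (-β) := by
  have h := AntitoneOn.sum_Icc_le_add_integral (f := fun x : ℝ => x ^ (-β)) hm
    (fun x hx y _ hxy => rpow_le_rpow_of_nonpos (by linarith [hx.1]) hxy (by linarith))
  simpa using h

theorem sum_Icc_rpow_neg_le_of_le {β : ℝ} (hβ : 0 ≤ β) {m n : ℕ} (hm : 1 ≤ m) (hmn : m ≤ n) :
    ∑ k ∈ Icc 1 m, (k : ℝ) ^ (-β) ≤ 1 + ∫ x in (1 : ℝ)..n, x ^ (-β) := by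
  have h0 : (0 : ℝ) ∉ Set.uIcc 1 (n : ℝ) :=
    Set.notMem_uIcc_of_lt zero_lt_one (by exact_mod_cast hm.trans hmn)
  refine (sum_Icc_rpow_neg_le hβ hm).trans (add_le_add_right ?_ 1)
  refine intervalIntegral.integral_mono_interval le_rfl (by exact_mod_cast hm)
    (by exact_mod_cast hmn) ?_ (intervalIntegral.intervalIntegrable_rpow (Or.inr h0))
  filter_upwards [MeasureTheory.ae_restrict_mem measurableSet_Ioc] with x hx
  exact rpow_nonneg (zero_le_one.trans hx.1.le) _

theorem sum_Icc_rpow_sub_one_le {α : ℝ} (hα0 : 0 < α) (hα1 : α ≤ 1) (m : ℕ) :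
    ∑ k ∈ Icc 1 m, (k : ℝ) ^ (α - 1) ≤ (m : ℝ) ^ α / α := by
  rcases Nat.eq_zero_or_pos m with rfl | hm
  · simp [zero_rpow hα0.ne']
  have h := sum_Icc_rpow_neg_le (β := 1 - α) (by linarith) hm
  rw [neg_sub, integral_rpow (Or.inl (by linarith)), sub_add_cancel, one_rpow] at h
  calc _ ≤ _ := h
    _ ≤ (m : ℝ) ^ α / α := by
      rw [add_div' _ _ _ hα0.ne']
      gcongr
      linarith

theorem integral_rpow_neg_from_one {β b : ℝ} (hb : 0 < b) :
    ∫ x in (1 : ℝ)..b, x ^ (-β) =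
      if β = 1 then log b else (1 - b ^ (1 - β)) / (β - 1) := by
  have h0 : (0 : ℝ) ∉ Set.uIcc 1 b := Set.notMem_uIcc_of_lt zero_lt_one hb
  split_ifs with hβ
  · subst hβ
    simp_rw [rpow_neg_one]
    rw [integral_inv_of_pos one_pos hb, div_one]
  · rw [integral_rpow (Or.inr ⟨by contrapose! hβ; linarith, h0⟩), one_rpow]
    rw [show -β + 1 = 1 - β by ring, ← neg_div_neg_eq, neg_sub, neg_sub]

theorem rpow_neg_mul_rpow_le {x y α β : ℝ} (hx : 0 < x) (hy : 0 < y) (hα : α ≤ 1)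
    (hβ : 0 ≤ β) :
    x ^ (-β) * y ^ (α - 1) ≤
      2 ^ (1 - α) * (x + y) ^ (α - 1) * x ^ (-β) + 2 ^ β * (x + y) ^ (-β) * y ^ (α - 1) := by
  have half_le {z γ : ℝ} (hz : (x + y) / 2 ≤ z) (hγ : γ ≤ 0) : z ^ γ ≤ 2 ^ (-γ) * (x + y) ^ γ :=
    calc z ^ γ ≤ ((x + y) / 2) ^ γ := rpow_le_rpow_of_nonpos (by positivity) hz hγ
      _ = 2 ^ (-γ) * (x + y) ^ γ := by
        rw [div_rpow (by positivity) zero_le_two, rpow_neg zero_le_two]; ring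
  rcases le_total x y with hxy | hyx
  · have hy' := half_le (z := y) (by linarith) (by linarith : α - 1 ≤ 0)
    rw [neg_sub] at hy'
    calc x ^ (-β) * y ^ (α - 1) ≤ x ^ (-β) * (2 ^ (1 - α) * (x + y) ^ (α - 1)) := by gcongr
      _ ≤ _ := by rw [mul_comm]; exact le_add_of_nonneg_right (by positivity)
  · have hx' := half_le (z := x) (by linarith) (by linarith : -β ≤ 0)
    rw [neg_neg] at hx'
    calc x ^ (-β) * y ^ (α - 1) ≤ 2 ^ β * (x + y) ^ (-β) * y ^ (α - 1) := by gcongr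
      _ ≤ _ := le_add_of_nonneg_left (by positivity)

theorem sum_Icc_reflect {M : Type*} [AddCommMonoid M] (f : ℕ → M) (m : ℕ) :
    ∑ i ∈ Icc 1 m, f (m - i + 1) = ∑ k ∈ Icc 1 m, f k := by
  refine sum_nbij' (fun i => m - i + 1) (fun k => m - k + 1) ?_ ?_ ?_ ?_ ?_ <;>
    intro a ha <;> simp only [mem_Icc] at * <;> omega

theorem sum_Icc_rpow_neg_mul_rpow_le {α β : ℝ} (hα0 : 0 < α) (hα1 : α ≤ 1) (hβ : 1 ≤ β)
    {m : ℕ} (hm : 1 ≤ m) :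
    ∑ i ∈ Icc 1 m, (i : ℝ) ^ (-β) * ((m - i + 1 : ℕ) : ℝ) ^ (α - 1) ≤
      (2 ^ (1 - α) * ∑ i ∈ Icc 1 m, (i : ℝ) ^ (-β) + 2 ^ β / α) * (m : ℝ) ^ (α - 1) := by
  have hm0 : (0 : ℝ) < m := by exact_mod_cast hm
  have hsplit : ∀ i ∈ Icc 1 m, (i : ℝ) ^ (-β) * ((m - i + 1 : ℕ) : ℝ) ^ (α - 1) ≤
      2 ^ (1 - α) * ((m : ℝ) + 1) ^ (α - 1) * (i : ℝ) ^ (-β) +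
        2 ^ β * ((m : ℝ) + 1) ^ (-β) * ((m - i + 1 : ℕ) : ℝ) ^ (α - 1) := by
    intro i hi
    rw [mem_Icc] at hi
    have hsum : (i : ℝ) + ((m - i + 1 : ℕ) : ℝ) = m + 1 := by
      exact_mod_cast (by omega : i + (m - i + 1) = m + 1)
    rw [← hsum]
    exact rpow_neg_mul_rpow_le (by exact_mod_cast hi.1) (by positivity) hα1 (by linarith)
  have hhead : ((m : ℝ) + 1) ^ (α - 1) ≤ (m : ℝ) ^ (α - 1) :=
    rpow_le_rpow_of_nonpos hm0 (by linarith) (by linarith)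
  have htail : ((m : ℝ) + 1) ^ (-β) * ((m : ℝ) ^ α / α) ≤ (m : ℝ) ^ (α - 1) / α := by
    calc ((m : ℝ) + 1) ^ (-β) * ((m : ℝ) ^ α / α) ≤ (m : ℝ) ^ (-1 : ℝ) * ((m : ℝ) ^ α / α) := by
          gcongr
          exact (rpow_le_rpow_of_nonpos hm0 (by linarith) (by linarith)).trans
            (rpow_le_rpow_of_exponent_le (by exact_mod_cast hm) (by linarith))
      _ = (m : ℝ) ^ (α - 1) / α := by
          rw [rpow_sub_one hm0.ne', rpow_neg_one]; ring
  calc _ ≤ _ := sum_le_sum hsplit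
    _ = 2 ^ (1 - α) * ((m : ℝ) + 1) ^ (α - 1) * ∑ i ∈ Icc 1 m, (i : ℝ) ^ (-β) +
          2 ^ β * ((m : ℝ) + 1) ^ (-β) * ∑ k ∈ Icc 1 m, (k : ℝ) ^ (α - 1) := by
      rw [sum_add_distrib, ← mul_sum, ← mul_sum,
        sum_Icc_reflect (fun k => (k : ℝ) ^ (α - 1))]
    _ ≤ 2 ^ (1 - α) * (m : ℝ) ^ (α - 1) * ∑ i ∈ Icc 1 m, (i : ℝ) ^ (-β) +
          2 ^ β * (((m : ℝ) + 1) ^ (-β) * ((m : ℝ) ^ α / α)) := by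
      rw [mul_assoc (2 ^ β)]
      gcongr
      exact sum_Icc_rpow_sub_one_le hα0 hα1 m
    _ ≤ 2 ^ (1 - α) * (m : ℝ) ^ (α - 1) * ∑ i ∈ Icc 1 m, (i : ℝ) ^ (-β) +
          2 ^ β * ((m : ℝ) ^ (α - 1) / α) := by gcongr
    _ = _ := by ring

/-- Discrete convolution bound, case `β ≥ 1`. -/
theorem stmt_6 (α β : ℝ) (hα0 : 0 < α) (hα1 : α < 1) (hβ : 1 ≤ β)
    (K : ℝ → ℕ → ℝ)
    (hK : ∀ (b : ℝ) (m : ℕ), K b m =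
      if b = 1 then 1 + Real.log m else 1 + (1 - (m : ℝ) ^ (1 - b)) / (b - 1)) :
    ∃ C : ℝ, 0 < C ∧ ∀ N q n : ℕ, 1 ≤ N → q * N + 1 ≤ n →
      ∑ j ∈ Finset.Icc (q * N + 1) n,
          ((j - q * N : ℕ) : ℝ) ^ (-β) * ((n - j + 1 : ℕ) : ℝ) ^ (α - 1)
        ≤ C * K β n * ((n - q * N : ℕ) : ℝ) ^ (α - 1) := by
  refine ⟨2 ^ (1 - α) + 2 ^ β / α, by positivity, fun N q n _ hn => ?_⟩
  obtain ⟨m, rfl⟩ : ∃ m, n = q * N + m := ⟨n - q * N, by omega⟩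
  have hm : 1 ≤ m := by omega
  have hKn : K β (q * N + m) = 1 + ∫ x in (1 : ℝ)..(q * N + m : ℕ), x ^ (-β) := by
    rw [hK, integral_rpow_neg_from_one (by exact_mod_cast (by omega : 0 < q * N + m))]
    split_ifs <;> rfl
  have hH : ∑ i ∈ Icc 1 m, (i : ℝ) ^ (-β) ≤ K β (q * N + m) :=
    hKn ▸ sum_Icc_rpow_neg_le_of_le (by linarith) hm (by omega)
  have hK1 : 1 ≤ K β (q * N + m) := by
    have h1 := sum_Icc_rpow_neg_le_of_le (β := β) (by linarith) le_rfl (by omega : 1 ≤ q * N + m)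
    rwa [Icc_self, sum_singleton, Nat.cast_one, one_rpow, ← hKn] at h1
  rw [← map_add_left_Icc, sum_map]
  simp only [addLeftEmbedding_apply, Nat.add_sub_cancel_left, Nat.add_sub_add_left]
  calc _ ≤ (2 ^ (1 - α) * ∑ i ∈ Icc 1 m, (i : ℝ) ^ (-β) + 2 ^ β / α) * (m : ℝ) ^ (α - 1) :=
        sum_Icc_rpow_neg_mul_rpow_le hα0 hα1.le hβ hm
    _ ≤ (2 ^ (1 - α) * K β (q * N + m) + 2 ^ β / α * K β (q * N + m)) * (m : ℝ) ^ (α - 1) := by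
        gcongr
        exact le_mul_of_one_le_right (by positivity) hK1
    _ = _ := by ring
end

section
/- Let 0 < α < 1 and β < 1 with β ≥ 0, and let N, q, n be integers with q ≥ 0 and qN + 1 ≤ n. Then there exists a constant C (independent of n, N, q) such that (1/Γ(1-β)) ∑_{j=qN+1}^{n} (j - qN)^{-β} (n - j + 1)^{α-1} ≤ C (1/Γ(1-β+α)) (n - qN)^{α-β}. -/
open Finset

/-- Power sum bound via integral comparison. -/
private lemma sum_pow_le_aux (s : ℝ) (hs1 : -1 < s) (hs0 : s ≤ 0) (m : ℕ) (hm : 1 ≤ m) :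
    ∑ k ∈ Finset.Icc 1 m, (k : ℝ) ^ s ≤ (1 + 1 / (s + 1)) * (m : ℝ) ^ (s + 1) := by
  have hm1 : (1 : ℝ) ≤ (m : ℝ) := by exact_mod_cast hm
  have hsp : (0 : ℝ) < s + 1 := by linarith
  have hanti : AntitoneOn (fun x : ℝ => x ^ s) (Set.Icc ((1 : ℕ) : ℝ) ((m : ℕ) : ℝ)) := by
    intro x hx y hy hxy
    have hx1 : (1 : ℝ) ≤ x := by simpa using hx.1
    exact Real.rpow_le_rpow_of_nonpos (by linarith) hxy hs0
  have hkey := AntitoneOn.sum_le_integral_Ico (f := fun x : ℝ => x ^ s) (a := 1) (b := m)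
    hm hanti
  have hint : (∫ x in ((1 : ℕ) : ℝ)..((m : ℕ) : ℝ), x ^ s)
      = ((m : ℝ) ^ (s + 1) - 1) / (s + 1) := by
    rw [integral_rpow (Or.inl hs1)]
    norm_num
  have hsplit : Finset.Icc 1 m = insert 1 (Finset.Icc 2 m) := by
    ext x; simp only [Finset.mem_Icc, Finset.mem_insert]; omega
  have hsum2 : ∑ k ∈ Finset.Icc 2 m, (k : ℝ) ^ s
      = ∑ i ∈ Finset.Ico 1 m, (((i + 1 : ℕ)) : ℝ) ^ s := by
    refine Finset.sum_nbij' (fun k => k - 1) (fun i => i + 1) ?_ ?_ ?_ ?_ ?_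
    · intro a ha; simp only [Finset.mem_Icc, Finset.mem_Ico] at *; omega
    · intro a ha; simp only [Finset.mem_Icc, Finset.mem_Ico] at *; omega
    · intro a ha; simp only [Finset.mem_Icc] at ha; show a - 1 + 1 = a; omega
    · intro a ha; simp only [Finset.mem_Ico] at ha; show a + 1 - 1 = a; omega
    · intro a ha; simp only [Finset.mem_Icc] at ha
      have h : a - 1 + 1 = a := by omega
      rw [h]
  have h1 : ((1 : ℕ) : ℝ) ^ s = 1 := by simp
  have hle : ∑ k ∈ Finset.Icc 2 m, (k : ℝ) ^ s ≤ ((m : ℝ) ^ (s + 1) - 1) / (s + 1) := by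
    rw [hsum2, ← hint]; exact hkey
  have hone : (1 : ℝ) ≤ (m : ℝ) ^ (s + 1) := Real.one_le_rpow hm1 hsp.le
  rw [hsplit, Finset.sum_insert (by simp)]
  have hdiv : ((m : ℝ) ^ (s + 1) - 1) / (s + 1) ≤ (m : ℝ) ^ (s + 1) / (s + 1) := by
    gcongr
    linarith
  have hfe : (1 + 1 / (s + 1)) * (m : ℝ) ^ (s + 1)
      = (m : ℝ) ^ (s + 1) + (m : ℝ) ^ (s + 1) / (s + 1) := by
    field_simp
  rw [hfe]
  have := (hle.trans hdiv)
  calc ((1 : ℕ) : ℝ) ^ s + ∑ k ∈ Finset.Icc 2 m, (k : ℝ) ^ s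
      ≤ (m : ℝ) ^ (s + 1) + (m : ℝ) ^ (s + 1) / (s + 1) := by
        rw [h1]; exact add_le_add hone this


private lemma key_aux (α β : ℝ) (hα0 : 0 < α) (hα1 : α < 1) (hβ0 : 0 ≤ β) (hβ1 : β < 1)
    (m : ℕ) (hm : 1 ≤ m) :
    ∑ k ∈ Finset.Icc 1 m, (k : ℝ) ^ (-β) * ((m - k + 1 : ℕ) : ℝ) ^ (α - 1)
      ≤ ((2:ℝ) ^ β * (1 + 1 / α) + (2:ℝ) ^ (1 - α) * (1 + 1 / (1 - β))) * (m : ℝ) ^ (α - β) := by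
  have hm0 : (0:ℝ) < (m:ℝ) := by exact_mod_cast Nat.lt_of_lt_of_le Nat.zero_lt_one hm
  set A := (((m:ℝ) + 1) / 2) ^ (-β) with hAdef
  set B := (((m:ℝ) + 1) / 2) ^ (α - 1) with hBdef
  have hhalf : (0:ℝ) < ((m:ℝ) + 1) / 2 := by positivity
  have step1 : ∀ k ∈ Finset.Icc 1 m, (k:ℝ) ^ (-β) * ((m - k + 1 : ℕ) : ℝ) ^ (α - 1)
      ≤ A * ((m - k + 1 : ℕ) : ℝ) ^ (α - 1) + (k:ℝ) ^ (-β) * B := by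
    intro k hk
    simp only [Finset.mem_Icc] at hk
    have hk0 : (0:ℝ) < (k:ℝ) := by exact_mod_cast Nat.lt_of_lt_of_le Nat.zero_lt_one hk.1
    have hkm : (k:ℝ) ≤ (m:ℝ) := by exact_mod_cast hk.2
    have hmk : ((m - k + 1 : ℕ) : ℝ) = (m:ℝ) - (k:ℝ) + 1 := by
      rw [Nat.cast_add, Nat.cast_sub hk.2, Nat.cast_one]
    have hmk0 : (0:ℝ) < ((m - k + 1 : ℕ) : ℝ) := by rw [hmk]; linarith
    rcases le_or_gt (m + 1) (2 * k) with h | h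
    · have hkk : ((m:ℝ) + 1) / 2 ≤ (k:ℝ) := by
        have : ((m:ℝ) + 1) ≤ 2 * (k:ℝ) := by exact_mod_cast h
        linarith
      have h1 : (k:ℝ) ^ (-β) ≤ A := Real.rpow_le_rpow_of_nonpos hhalf hkk (by linarith)
      have h2 : (0:ℝ) ≤ (k:ℝ) ^ (-β) * B := by
        have := Real.rpow_nonneg hk0.le (-β)
        have := Real.rpow_nonneg hhalf.le (α - 1)
        rw [hBdef]; positivity
      nlinarith [mul_le_mul_of_nonneg_right h1 (Real.rpow_nonneg hmk0.le (α - 1))]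
    · have hkk : ((m:ℝ) + 1) / 2 ≤ ((m - k + 1 : ℕ) : ℝ) := by
        have hn : 2 * k ≤ m + 1 := by omega
        have : 2 * (k:ℝ) ≤ (m:ℝ) + 1 := by exact_mod_cast hn
        rw [hmk]; linarith
      have h1 : ((m - k + 1 : ℕ) : ℝ) ^ (α - 1) ≤ B :=
        Real.rpow_le_rpow_of_nonpos hhalf hkk (by linarith)
      have h2 : (0:ℝ) ≤ A * ((m - k + 1 : ℕ) : ℝ) ^ (α - 1) := by
        have := Real.rpow_nonneg hmk0.le (α - 1)
        rw [hAdef]; positivity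
      nlinarith [mul_le_mul_of_nonneg_left h1 (Real.rpow_nonneg hk0.le (-β))]
  have step2 := Finset.sum_le_sum step1
  rw [Finset.sum_add_distrib, ← Finset.mul_sum, ← Finset.sum_mul] at step2
  have hrefl : ∑ k ∈ Finset.Icc 1 m, ((m - k + 1 : ℕ) : ℝ) ^ (α - 1)
      = ∑ k ∈ Finset.Icc 1 m, (k : ℝ) ^ (α - 1) := by
    refine Finset.sum_nbij' (fun k => m + 1 - k) (fun k => m + 1 - k) ?_ ?_ ?_ ?_ ?_
    · intro a ha; simp only [Finset.mem_Icc] at *; omega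
    · intro a ha; simp only [Finset.mem_Icc] at *; omega
    · intro a ha; simp only [Finset.mem_Icc] at ha; show m + 1 - (m + 1 - a) = a; omega
    · intro a ha; simp only [Finset.mem_Icc] at ha; show m + 1 - (m + 1 - a) = a; omega
    · intro a ha; simp only [Finset.mem_Icc] at ha
      have h : m - a + 1 = m + 1 - a := by omega
      rw [h]
  have hSα : ∑ k ∈ Finset.Icc 1 m, ((m - k + 1 : ℕ) : ℝ) ^ (α - 1)
      ≤ (1 + 1 / α) * (m:ℝ) ^ α := by
    rw [hrefl]
    have := sum_pow_le_aux (α - 1) (by linarith) (by linarith) m hm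
    rw [show α - 1 + 1 = α from by ring] at this
    simpa [show α - 1 + 1 = α from by ring] using this
  have hSβ : ∑ k ∈ Finset.Icc 1 m, (k:ℝ) ^ (-β) ≤ (1 + 1 / (1 - β)) * (m:ℝ) ^ (1 - β) := by
    have := sum_pow_le_aux (-β) (by linarith) (by linarith) m hm
    rw [show -β + 1 = 1 - β from by ring] at this
    simpa [show -β + 1 = 1 - β from by ring] using this
  have hdiv2 : ∀ s : ℝ, ((m:ℝ) / 2) ^ s = (2:ℝ) ^ (-s) * (m:ℝ) ^ s := by
    intro s
    rw [Real.div_rpow hm0.le (by norm_num), div_eq_mul_inv,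
      ← Real.rpow_neg (by norm_num : (0:ℝ) ≤ 2), mul_comm]
  have hA : A ≤ (2:ℝ) ^ β * (m:ℝ) ^ (-β) := by
    have h1 : A ≤ ((m:ℝ) / 2) ^ (-β) :=
      Real.rpow_le_rpow_of_nonpos (by positivity) (by linarith) (by linarith)
    have h2 : ((m:ℝ) / 2) ^ (-β) = (2:ℝ) ^ β * (m:ℝ) ^ (-β) := by
      rw [hdiv2 (-β), neg_neg]
    exact h1.trans_eq h2
  have hB : B ≤ (2:ℝ) ^ (1 - α) * (m:ℝ) ^ (α - 1) := by
    have h1 : B ≤ ((m:ℝ) / 2) ^ (α - 1) :=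
      Real.rpow_le_rpow_of_nonpos (by positivity) (by linarith) (by linarith)
    have h2 : ((m:ℝ) / 2) ^ (α - 1) = (2:ℝ) ^ (1 - α) * (m:ℝ) ^ (α - 1) := by
      rw [hdiv2 (α - 1), show -(α - 1) = 1 - α from by ring]
    exact h1.trans_eq h2
  have hSα0 : (0:ℝ) ≤ ∑ k ∈ Finset.Icc 1 m, ((m - k + 1 : ℕ) : ℝ) ^ (α - 1) :=
    Finset.sum_nonneg fun k _ => Real.rpow_nonneg (Nat.cast_nonneg _) _
  have hSβ0 : (0:ℝ) ≤ ∑ k ∈ Finset.Icc 1 m, (k:ℝ) ^ (-β) :=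
    Finset.sum_nonneg fun k _ => Real.rpow_nonneg (Nat.cast_nonneg _) _
  have hB0 : (0:ℝ) ≤ B := Real.rpow_nonneg hhalf.le _
  have t1 : A * (∑ k ∈ Finset.Icc 1 m, ((m - k + 1 : ℕ) : ℝ) ^ (α - 1))
      ≤ ((2:ℝ) ^ β * (m:ℝ) ^ (-β)) * ((1 + 1 / α) * (m:ℝ) ^ α) :=
    mul_le_mul hA hSα hSα0 (by positivity)
  have t2 : (∑ k ∈ Finset.Icc 1 m, (k:ℝ) ^ (-β)) * B
      ≤ ((1 + 1 / (1 - β)) * (m:ℝ) ^ (1 - β)) * ((2:ℝ) ^ (1 - α) * (m:ℝ) ^ (α - 1)) :=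
    mul_le_mul hSβ hB hB0 (by
      have h1 : (0:ℝ) < 1 - β := by linarith
      positivity)
  have e1 : ((2:ℝ) ^ β * (m:ℝ) ^ (-β)) * ((1 + 1 / α) * (m:ℝ) ^ α)
      = (2:ℝ) ^ β * (1 + 1 / α) * (m:ℝ) ^ (α - β) := by
    rw [show α - β = -β + α from by ring, Real.rpow_add hm0]; ring
  have e2 : ((1 + 1 / (1 - β)) * (m:ℝ) ^ (1 - β)) * ((2:ℝ) ^ (1 - α) * (m:ℝ) ^ (α - 1))
      = (2:ℝ) ^ (1 - α) * (1 + 1 / (1 - β)) * (m:ℝ) ^ (α - β) := by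
    rw [show α - β = (1 - β) + (α - 1) from by ring, Real.rpow_add hm0]; ring
  calc ∑ k ∈ Finset.Icc 1 m, (k : ℝ) ^ (-β) * ((m - k + 1 : ℕ) : ℝ) ^ (α - 1)
      ≤ A * (∑ k ∈ Finset.Icc 1 m, ((m - k + 1 : ℕ) : ℝ) ^ (α - 1))
        + (∑ k ∈ Finset.Icc 1 m, (k:ℝ) ^ (-β)) * B := step2
    _ ≤ ((2:ℝ) ^ β * (m:ℝ) ^ (-β)) * ((1 + 1 / α) * (m:ℝ) ^ α)
        + ((1 + 1 / (1 - β)) * (m:ℝ) ^ (1 - β)) * ((2:ℝ) ^ (1 - α) * (m:ℝ) ^ (α - 1)) :=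
      add_le_add t1 t2
    _ = ((2:ℝ) ^ β * (1 + 1 / α) + (2:ℝ) ^ (1 - α) * (1 + 1 / (1 - β))) * (m : ℝ) ^ (α - β) := by
      rw [e1, e2]; ring

/-- Discrete convolution bound, case `0 ≤ β < 1`. -/
theorem stmt_7 (α β : ℝ) (hα0 : 0 < α) (hα1 : α < 1) (hβ0 : 0 ≤ β) (hβ1 : β < 1) :
    ∃ C : ℝ, 0 < C ∧ ∀ N q n : ℕ, 1 ≤ N → q * N + 1 ≤ n →
      (1 / Real.Gamma (1 - β)) *
          ∑ j ∈ Finset.Icc (q * N + 1) n,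
            ((j - q * N : ℕ) : ℝ) ^ (-β) * ((n - j + 1 : ℕ) : ℝ) ^ (α - 1)
        ≤ C * (1 / Real.Gamma (1 - β + α)) * ((n - q * N : ℕ) : ℝ) ^ (α - β) := by
  have hg1 : 0 < Real.Gamma (1 - β) := Real.Gamma_pos_of_pos (by linarith)
  have hg2 : 0 < Real.Gamma (1 - β + α) := Real.Gamma_pos_of_pos (by linarith)
  set K : ℝ := (2:ℝ) ^ β * (1 + 1 / α) + (2:ℝ) ^ (1 - α) * (1 + 1 / (1 - β)) with hKdef
  have hK : 0 < K := by
    have h1 : (0:ℝ) < 1 + 1 / α := by positivity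
    have h2 : (0:ℝ) < 1 + 1 / (1 - β) := by
      have : (0:ℝ) < 1 - β := by linarith
      positivity
    have h3 : (0:ℝ) < (2:ℝ) ^ β := Real.rpow_pos_of_pos (by norm_num) _
    have h4 : (0:ℝ) < (2:ℝ) ^ (1 - α) := Real.rpow_pos_of_pos (by norm_num) _
    rw [hKdef]; positivity
  refine ⟨K * Real.Gamma (1 - β + α) / Real.Gamma (1 - β),
    div_pos (mul_pos hK hg2) hg1, ?_⟩
  intro N q n hN hn
  set m : ℕ := n - q * N with hmdef
  have hm : 1 ≤ m := by omega
  have hsum : ∑ j ∈ Finset.Icc (q * N + 1) n,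
        ((j - q * N : ℕ) : ℝ) ^ (-β) * ((n - j + 1 : ℕ) : ℝ) ^ (α - 1)
      = ∑ k ∈ Finset.Icc 1 m, (k : ℝ) ^ (-β) * ((m - k + 1 : ℕ) : ℝ) ^ (α - 1) := by
    refine Finset.sum_nbij' (fun j => j - q * N) (fun k => q * N + k) ?_ ?_ ?_ ?_ ?_
    · intro a ha; simp only [Finset.mem_Icc] at *; omega
    · intro a ha; simp only [Finset.mem_Icc] at *; omega
    · intro a ha; simp only [Finset.mem_Icc] at ha; show q * N + (a - q * N) = a; omega
    · intro a ha; simp only [Finset.mem_Icc] at ha; show q * N + a - q * N = a; omega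
    · intro a ha; simp only [Finset.mem_Icc] at ha
      have h : n - a + 1 = m - (a - q * N) + 1 := by omega
      rw [h]
  rw [hsum]
  have hkey := key_aux α β hα0 hα1 hβ0 hβ1 m hm
  calc (1 / Real.Gamma (1 - β)) *
        ∑ k ∈ Finset.Icc 1 m, (k : ℝ) ^ (-β) * ((m - k + 1 : ℕ) : ℝ) ^ (α - 1)
      ≤ (1 / Real.Gamma (1 - β)) * (K * (m : ℝ) ^ (α - β)) := by
        apply mul_le_mul_of_nonneg_left hkey (by positivity)
    _ = K * Real.Gamma (1 - β + α) / Real.Gamma (1 - β) * (1 / Real.Gamma (1 - β + α))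
        * ((m : ℕ) : ℝ) ^ (α - β) := by
        field_simp
end

section
/- Let (a_k)_{k≥0} be the L1 weights for 0 < α < 1. For square-summable sequences, the discrete fractional derivative operator D_N^α v^n := ∑_{k=0}^{n-1} a_k (v^{n-k} - v^{n-k-1}) acting on elements v^j of an inner product space satisfies ⟨D_N^α v^n, v^n⟩ ≥ (D_N^α ‖v^n‖) ‖v^n‖ for each 1 ≤ n ≤ M, where in the right-hand side D_N^α acts on the scalar sequence (‖v^j‖)_{j=0}^{M}. -/
open scoped RealInnerProductSpace

/-- The L1 discrete fractional derivative satisfies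
`⟨D_N^α v^n, v^n⟩ ≥ (D_N^α ‖v^n‖) ‖v^n‖`. -/
theorem stmt_15 {E : Type*} [NormedAddCommGroup E] [InnerProductSpace ℝ E]
    (α ρ : ℝ) (hα0 : 0 < α) (hα1 : α < 1) (hρ : 0 < ρ)
    (M : ℕ) (hM : 1 ≤ M)
    (a : ℕ → ℝ)
    (ha : ∀ k : ℕ, a k = (((k : ℝ) + 1) ^ (1 - α) - (k : ℝ) ^ (1 - α)) /
      (Real.Gamma (2 - α) * ρ ^ α))
    (v : ℕ → E) :
    ∀ n : ℕ, 1 ≤ n → n ≤ M →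
      ⟪∑ k ∈ Finset.range n, a k • (v (n - k) - v (n - k - 1)), v n⟫
        ≥ (∑ k ∈ Finset.range n, a k * (‖v (n - k)‖ - ‖v (n - k - 1)‖)) * ‖v n‖ := by
  intro n hn hnM
  have hden : 0 < Real.Gamma (2 - α) * ρ ^ α := by
    have h1 : 0 < Real.Gamma (2 - α) := Real.Gamma_pos_of_pos (by linarith)
    have h2 : 0 < ρ ^ α := Real.rpow_pos_of_pos hρ α
    positivity
  have hp0 : (0:ℝ) < 1 - α := by linarith
  have hp1 : (1:ℝ) - α < 1 := by linarith
  have ha_nonneg : ∀ k : ℕ, 0 ≤ a k := by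
    intro k
    rw [ha k]
    apply div_nonneg _ hden.le
    have : (k:ℝ) ^ (1-α) ≤ ((k:ℝ)+1) ^ (1-α) :=
      Real.rpow_le_rpow (Nat.cast_nonneg k) (by linarith) hp0.le
    linarith
  have ha_anti : ∀ k : ℕ, a (k+1) ≤ a k := by
    intro k
    rw [ha k, ha (k+1)]
    apply (div_le_div_iff_of_pos_right hden).mpr
    push_cast
    -- need ((k+2)^p - (k+1)^p) ≤ ((k+1)^p - k^p), i.e. (k+2)^p + k^p ≤ 2*(k+1)^p
    have hcc := (Real.strictConcaveOn_rpow hp0 hp1).concaveOn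
    have hmem1 : ((k:ℝ)) ∈ Set.Ici (0:ℝ) := Set.mem_Ici.2 (Nat.cast_nonneg k)
    have hmem2 : ((k:ℝ)+2) ∈ Set.Ici (0:ℝ) := by
      simp only [Set.mem_Ici]; positivity
    have h := hcc.2 hmem1 hmem2 (by norm_num : (0:ℝ) ≤ 1/2)
      (by norm_num : (0:ℝ) ≤ 1/2) (by norm_num)
    simp only [smul_eq_mul] at h
    have heq : (1/2:ℝ) * (k:ℝ) + (1/2) * ((k:ℝ)+2) = (k:ℝ)+1 := by ring
    rw [heq] at h
    have h22 : ((k:ℝ)+1+1) ^ (1-α) = ((k:ℝ)+2) ^ (1-α) := by ring_nf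
    linarith
  set w : ℕ → ℝ := fun j => ⟪v j, v n⟫ with hw
  set u : ℕ → ℝ := fun j => ‖v j‖ * ‖v n‖ with hu
  have hwu : ∀ j, w j ≤ u j := fun j => real_inner_le_norm (v j) (v n)
  have hwn : w n = u n := real_inner_self_eq_norm_mul_norm (v n)
  set c : ℕ → ℝ := fun j => u j - w j with hc
  have hc0 : ∀ j, 0 ≤ c j := fun j => sub_nonneg.2 (hwu j)
  have hcn : c n = 0 := by simp [hc, hwn]
  -- Rewrite LHS
  have hL : ⟪∑ k ∈ Finset.range n, a k • (v (n - k) - v (n - k - 1)), v n⟫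
      = ∑ k ∈ Finset.range n, a k * (w (n-k) - w (n-k-1)) := by
    rw [sum_inner]
    refine Finset.sum_congr rfl fun k _ => ?_
    rw [real_inner_smul_left, inner_sub_left]
  rw [hL, Finset.sum_mul]
  have hR : ∀ k ∈ Finset.range n,
      a k * (‖v (n-k)‖ - ‖v (n-k-1)‖) * ‖v n‖ = a k * (u (n-k) - u (n-k-1)) := by
    intro k _
    simp only [hu]; ring
  rw [Finset.sum_congr rfl hR]
  rw [ge_iff_le, ← sub_nonneg, ← Finset.sum_sub_distrib]
  have hterm : ∀ k, a k * (w (n-k) - w (n-k-1)) - a k * (u (n-k) - u (n-k-1))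
      = a k * (c (n-k-1)) - a k * (c (n-k)) := by
    intro k; simp only [hc]; ring
  simp only [hterm]
  rw [Finset.sum_sub_distrib]
  -- Split the sums using n = (n-1)+1
  obtain ⟨m, rfl⟩ : ∃ m, n = m + 1 := ⟨n - 1, (Nat.succ_pred_eq_of_pos hn).symm⟩
  rw [Finset.sum_range_succ (fun k => a k * c (m+1-k-1)),
    Finset.sum_range_succ' (fun k => a k * c (m+1-k))]
  have e1 : m + 1 - m - 1 = 0 := by omega
  have e2 : m + 1 - 0 = m + 1 := rfl
  rw [e1, e2, hcn, mul_zero, add_zero]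
  have e3 : ∀ k, m + 1 - (k+1) = m + 1 - k - 1 := fun k => by omega
  simp only [e3]
  have h1 : ∑ k ∈ Finset.range m, a (k+1) * c (m+1-k-1)
      ≤ ∑ k ∈ Finset.range m, a k * c (m+1-k-1) := by
    refine Finset.sum_le_sum fun k _ => ?_
    exact mul_le_mul_of_nonneg_right (ha_anti k) (hc0 _)
  have h2 : 0 ≤ a m * c 0 := mul_nonneg (ha_nonneg m) (hc0 0)
  linarith
end
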